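/- Let S be a finite generalized quadrangle of order (s,t) with s ≥ 2, S' a proper full subquadrangle of order (s,t') with t = s·t' and every subtended ovoid of S' θ-subtended (θ > 1), let A be the geometry of points and lines of S not in S', E the geometry of subtended ovoids and rosettes of S', and let γ : A → E be a θ-cover. For each point x of S', let x** denote the common point of S' incident (in S) with all lines of A whose γ-image is a rosette whose ovoids share x. Then for all distinct points x, y of S', x** and y** are collinear in S' if and only if x and y are collinear in S'; consequently the map x ↦ x**, together with the induced map on lines, is an automorphism of S'. -/

import Mathlib

namespace GQpaper

variable {P L : Type}

/-- Two points of a point-line geometry are collinear: they are equal or lie on a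
common line. -/
def Collinear (I : P → L → Prop) (x y : P) : Prop :=
  x = y ∨ ∃ l : L, I x l ∧ I y l

/-- Generalized quadrangle axioms: two distinct points are on at most one common line,
and for every non-incident point-line pair `(x, l)` there is a unique pair `(y, M)`
with `x I M`, `y I M`, `y I l`. -/
def IsGQ (I : P → L → Prop) : Prop :=
  (∀ x y : P, x ≠ y → ∀ M N : L, I x M → I y M → I x N → I y N → M = N) ∧
  (∀ (x : P) (l : L), ¬ I x l → ∃! p : P × L, I x p.2 ∧ I p.1 p.2 ∧ I p.1 l)

/-- Thick: every line has at least 3 points and every point is on at least 3 lines. -/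
def Thick (I : P → L → Prop) : Prop :=
  (∀ l : L, ∃ x y z : P, x ≠ y ∧ y ≠ z ∧ x ≠ z ∧ I x l ∧ I y l ∧ I z l) ∧
  (∀ x : P, ∃ l m n : L, l ≠ m ∧ m ≠ n ∧ l ≠ n ∧ I x l ∧ I x m ∧ I x n)

/-- The induced incidence relation on a subgeometry `(P', L')`. -/
def SubIncid (I : P → L → Prop) (P' : Set P) (L' : Set L) : ↥P' → ↥L' → Prop :=
  fun x l => I x.1 l.1

/-- A subgeometry is full if every point of the ambient geometry incident with one of
its lines belongs to it. -/
def IsFull (I : P → L → Prop) (P' : Set P) (L' : Set L) : Prop :=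
  ∀ l ∈ L', ∀ x : P, I x l → x ∈ P'

/-- A geometrical hyperplane: each of its lines contains at least 2 of its points, and
every line of the ambient geometry either is a line of the subgeometry all of whose
points lie in the subgeometry, or contains exactly one point of the subgeometry. -/
def IsGeomHyperplane (I : P → L → Prop) (P' : Set P) (L' : Set L) : Prop :=
  (∀ l ∈ L', ∃ x y : P, x ≠ y ∧ x ∈ P' ∧ y ∈ P' ∧ I x l ∧ I y l) ∧
  (∀ l : L, (l ∈ L' ∧ ∀ x : P, I x l → x ∈ P') ∨ (l ∉ L' ∧ ∃! x : P, I x l ∧ x ∈ P'))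

/-- An ovoid of the subquadrangle `(P', L')`: a set of its points meeting every one of
its lines in exactly one point. -/
def IsOvoid (I : P → L → Prop) (P' : Set P) (L' : Set L) (O : Set P) : Prop :=
  O ⊆ P' ∧ ∀ l ∈ L', ∃! x : P, x ∈ O ∧ I x l

/-- The ovoid of `S'` subtended by an external point `x`: the points of `P'` collinear
with `x`. -/
def subtendedOvoid (I : P → L → Prop) (P' : Set P) (x : P) : Set P :=
  {y : P | y ∈ P' ∧ Collinear I x y}

/-- The rosette of ovoids determined by a line `l` (not in the subquadrangle): the set
of the ovoids subtended by the external points of `l`. -/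
def rosette (I : P → L → Prop) (P' : Set P) (l : L) : Set (Set P) :=
  {O : Set P | ∃ x : P, x ∉ P' ∧ I x l ∧ O = subtendedOvoid I P' x}

/-- Points of the geometry `A = S \ S'`. -/
abbrev APoint (P' : Set P) : Type := {x : P // x ∉ P'}

/-- Lines of the geometry `A = S \ S'`. -/
abbrev ALine (L' : Set L) : Type := {l : L // l ∉ L'}

/-- Incidence in the geometry `A`. -/
def AIncid (I : P → L → Prop) (P' : Set P) (L' : Set L) :
    APoint P' → ALine L' → Prop :=
  fun x l => I x.1 l.1

/-- Points of the geometry `E`: the subtended ovoids of `S'`. -/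
abbrev EPoint (I : P → L → Prop) (P' : Set P) : Type :=
  {O : Set P // ∃ x : P, x ∉ P' ∧ O = subtendedOvoid I P' x}

/-- Lines of the geometry `E`: the rosettes of subtended ovoids of `S'`. -/
abbrev ELine (I : P → L → Prop) (P' : Set P) (L' : Set L) : Type :=
  {R : Set (Set P) // ∃ l : L, l ∉ L' ∧ R = rosette I P' l}

/-- Incidence in `E`: membership of an ovoid in a rosette. -/
def EIncid (I : P → L → Prop) (P' : Set P) (L' : Set L) :
    EPoint I P' → ELine I P' L' → Prop :=
  fun O R => O.1 ∈ R.1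

/-- The canonical projection `π : A → E` on points. -/
def piPoint (I : P → L → Prop) (P' : Set P) : APoint P' → EPoint I P' :=
  fun x => ⟨subtendedOvoid I P' x.1, x.1, x.2, rfl⟩

/-- The canonical projection `π : A → E` on lines. -/
def piLine (I : P → L → Prop) (P' : Set P) (L' : Set L) : ALine L' → ELine I P' L' :=
  fun l => ⟨rosette I P' l.1, l.1, l.2, rfl⟩

/-- A morphism of point-line geometries: preserves incidence. -/
def IsMorphism {P₁ L₁ P₂ L₂ : Type} (I₁ : P₁ → L₁ → Prop) (I₂ : P₂ → L₂ → Prop)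
    (fp : P₁ → P₂) (fl : L₁ → L₂) : Prop :=
  ∀ x l, I₁ x l → I₂ (fp x) (fl l)

/-- A cover: a morphism which is locally bijective, i.e. for every point `x` it induces
a bijection between the lines through `x` and the lines through `fp x`, and dually. -/
def IsCover {P₁ L₁ P₂ L₂ : Type} (I₁ : P₁ → L₁ → Prop) (I₂ : P₂ → L₂ → Prop)
    (fp : P₁ → P₂) (fl : L₁ → L₂) : Prop :=
  IsMorphism I₁ I₂ fp fl ∧
  (∀ (x : P₁) (m : L₂), I₂ (fp x) m → ∃! l : L₁, I₁ x l ∧ fl l = m) ∧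
  (∀ (l : L₁) (y : P₂), I₂ y (fl l) → ∃! x : P₁, I₁ x l ∧ fp x = y)

/-- An isomorphism of point-line geometries: a bijective morphism whose inverse is a
morphism, equivalently a pair of bijections under which incidence corresponds. -/
def IsIso {P₁ L₁ P₂ L₂ : Type} (I₁ : P₁ → L₁ → Prop) (I₂ : P₂ → L₂ → Prop)
    (fp : P₁ → P₂) (fl : L₁ → L₂) : Prop :=
  Function.Bijective fp ∧ Function.Bijective fl ∧
  ∀ (x : P₁) (l : L₁), I₁ x l ↔ I₂ (fp x) (fl l)

/-- An automorphism of a point-line geometry. -/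
def IsAuto (I : P → L → Prop) (fp : P → P) (fl : L → L) : Prop :=
  IsIso I I fp fl

/-- A finite GQ has order `(s, t)` if every line carries `s + 1` points and every point
carries `t + 1` lines. -/
def HasOrder (I : P → L → Prop) (s t : ℕ) : Prop :=
  (∀ l : L, {x : P | I x l}.ncard = s + 1) ∧
  (∀ x : P, {l : L | I x l}.ncard = t + 1)

/-- Every subtended ovoid of `S'` is subtended by exactly `θ` external points. -/
def AllThetaSubtended (I : P → L → Prop) (P' : Set P) (θ : ℕ) : Prop :=
  ∀ x : P, x ∉ P' →
    {y : P | y ∉ P' ∧ subtendedOvoid I P' y = subtendedOvoid I P' x}.ncard = θ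

/-- The perp of a set of points: all points collinear with every point of the set. -/
def perpSet (I : P → L → Prop) (X : Set P) : Set P :=
  {z : P | ∀ y ∈ X, Collinear I z y}

/-- The action of a permutation of the points of `S'` on subsets of `P'`. -/
def ovMap (P' : Set P) (f : ↥P' → ↥P') (O : Set P) : Set P :=
  {z : P | ∃ y : ↥P', y.1 ∈ O ∧ (f y).1 = z}


/-!
Because `t = s t'`, the ovoid subtended by a point `x` outside `S'` has `s t' + 1 = t + 1` points,
one on each line through `x`; so every line outside `S'` meets `S'` in exactly one point, and the
ovoids of a rosette have a unique common point, its base. The defining property of `x ↦ x**` says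
that every line of `A` whose image under `γ` has base `x` passes through `x**`. Every point `p` of
`S'` lies on a line of `A`, whose image has some base `x`, so `x** = p`: the map is onto, hence
bijective, and then the lines of `A` through `x**` are exactly those whose image has base `x`.
This yields: `x` lies in the ovoid `γ(a)` iff `x**` lies in the ovoid subtended by `a`.
Two points of `S'` that are not collinear in `S'` have `t + 1` common neighbours in `S` but only
`t' + 1` in `S'`, so they lie in a common subtended ovoid; the previous equivalence carries this
between `x, y` and `x**, y**`, and ovoids contain no collinear pairs. Finally, a bijection of the
points of a generalized quadrangle preserving collinearity in both directions maps lines onto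
lines.
-/

open Set

theorem ncard_eq_of_forall_existsUnique {α β : Type*} {s : Set α} {t : Set β} (R : α → β → Prop)
    (hs : ∀ a ∈ s, ∃! b, b ∈ t ∧ R a b) (ht : ∀ b ∈ t, ∃! a, a ∈ s ∧ R a b) :
    s.ncard = t.ncard := by
  refine ncard_congr (fun a ha => (hs a ha).exists.choose)
    (fun a ha => (hs a ha).exists.choose_spec.1) ?_ ?_
  · intro a a' ha ha' h
    obtain ⟨hb, hab⟩ := (hs a ha).exists.choose_spec
    obtain ⟨-, hab'⟩ := (hs a' ha').exists.choose_spec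
    rw [← h] at hab'
    exact (ht _ hb).unique ⟨ha, hab⟩ ⟨ha', hab'⟩
  · intro b hb
    obtain ⟨a, ⟨ha, hab⟩, -⟩ := ht b hb
    exact ⟨a, ha, (hs a ha).unique (hs a ha).exists.choose_spec ⟨hb, hab⟩⟩

theorem ncard_biUnion_of_ncard_eq {ι α : Type*} {t : Set ι} (ht : t.Finite) {s : ι → Set α}
    (hfin : ∀ i ∈ t, (s i).Finite) (hdisj : t.PairwiseDisjoint s) {k : ℕ}
    (hs : ∀ i ∈ t, (s i).ncard = k) : (⋃ i ∈ t, s i).ncard = t.ncard * k := by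
  rw [ht.ncard_biUnion hfin hdisj, finsum_mem_congr rfl hs,
    finsum_mem_eq_finite_toFinset_sum _ ht, Finset.sum_const, smul_eq_mul,
    ncard_eq_toFinset_card t ht]

section GeneralizedQuadrangle

variable {I : P → L → Prop}

theorem Collinear.symm {x y : P} (h : Collinear I x y) : Collinear I y x := by
  rcases h with h | ⟨l, hx, hy⟩
  exacts [Or.inl h.symm, Or.inr ⟨l, hy, hx⟩]

theorem Collinear.exists_line {x y : P} (h : Collinear I x y) (hne : x ≠ y) :
    ∃ l, I x l ∧ I y l :=
  h.resolve_left hne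

theorem collinear_of_incid {x y : P} {l : L} (hx : I x l) (hy : I y l) : Collinear I x y :=
  Or.inr ⟨l, hx, hy⟩

theorem IsGQ.proj_unique {x y₁ y₂ : P} {m n₁ n₂ : L} (hGQ : IsGQ I) (hxm : ¬ I x m)
    (hx₁ : I x n₁) (hy₁ : I y₁ n₁) (hy₁m : I y₁ m)
    (hx₂ : I x n₂) (hy₂ : I y₂ n₂) (hy₂m : I y₂ m) : y₁ = y₂ ∧ n₁ = n₂ :=
  Prod.ext_iff.1 ((hGQ.2 x m hxm).unique (y₁ := (y₁, n₁)) (y₂ := (y₂, n₂))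
    ⟨hx₁, hy₁, hy₁m⟩ ⟨hx₂, hy₂, hy₂m⟩)

/-- A generalized quadrangle has no triangles. -/
theorem IsGQ.incid_of_collinear_of_collinear (hGQ : IsGQ I) {u v x : P} {m : L} (huv : u ≠ v)
    (hu : I u m) (hv : I v m) (hxu : Collinear I x u) (hxv : Collinear I x v) : I x m := by
  by_contra hxm
  obtain ⟨n₁, hxn₁, hun₁⟩ := hxu.exists_line fun h => hxm (h ▸ hu)
  obtain ⟨n₂, hxn₂, hvn₂⟩ := hxv.exists_line fun h => hxm (h ▸ hv)
  exact huv (hGQ.proj_unique hxm hxn₁ hun₁ hu hxn₂ hvn₂ hv).1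

theorem IsGQ.ncard_perpSet_pair (hGQ : IsGQ I) {t : ℕ} (hdeg : ∀ x, {l | I x l}.ncard = t + 1)
    {u v : P} (huv : ¬ Collinear I u v) : (perpSet I {u, v}).ncard = t + 1 := by
  rw [← hdeg u]
  refine ncard_eq_of_forall_existsUnique I (fun z hz => ?_) (fun n hun => ?_)
  · have hzu : z ≠ u := fun h => huv (h ▸ hz v (by simp))
    obtain ⟨n, hzn, hun⟩ := (hz u (by simp)).exists_line hzu
    exact ⟨n, ⟨hun, hzn⟩, fun n' ⟨hun', hzn'⟩ => hGQ.1 z u hzu n' n hzn' hun' hzn hun⟩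
  · have hvn : ¬ I v n := fun hvn => huv (collinear_of_incid hun hvn)
    obtain ⟨⟨z, M⟩, ⟨hvM, hzM, hzn⟩, -⟩ := hGQ.2 v n hvn
    refine ⟨z, ⟨?_, hzn⟩, fun z' ⟨hz', hz'n⟩ => ?_⟩
    · rintro y (rfl | rfl)
      exacts [collinear_of_incid hzn hun, collinear_of_incid hzM hvM]
    · have hz'v : z' ≠ v := fun h => hvn (h ▸ hz'n)
      obtain ⟨M', hz'M', hvM'⟩ := (hz' v (by simp)).exists_line hz'v
      exact (hGQ.proj_unique hvn hvM' hz'M' hz'n hvM hzM hzn).1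

theorem IsGQ.ncard_biUnion_lines_sdiff [Finite P] (hGQ : IsGQ I) {t : ℕ}
    (hdeg : ∀ x, {l | I x l}.ncard = t + 1) {m : L} {Y : Set P} (hY : ∀ y ∈ Y, I y m) :
    (⋃ y ∈ Y, {n | I y n} \ {m}).ncard = Y.ncard * t := by
  refine ncard_biUnion_of_ncard_eq (toFinite Y)
    (fun y _ => (finite_of_ncard_ne_zero (by simp [hdeg y])).sdiff) ?_ fun y hy => ?_
  · intro y₁ hy₁ y₂ hy₂ hne
    exact disjoint_left.2 fun n ⟨h₁, hn⟩ ⟨h₂, _⟩ =>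
      hn (hGQ.1 y₁ y₂ hne n m h₁ h₂ (hY y₁ hy₁) (hY y₂ hy₂))
  · rw [ncard_sdiff_singleton_of_mem (s := {n | I y n}) (hY y hy), hdeg y, Nat.add_sub_cancel]

theorem IsGQ.ncard_eq_of_isOvoid [Finite P] (hGQ : IsGQ I) {s t : ℕ} (hOrd : HasOrder I s t)
    {O : Set P} (hO : IsOvoid I univ univ O) (m₀ : L) : O.ncard = s * t + 1 := by
  obtain ⟨p, ⟨hpO, hpm⟩, hp⟩ := hO.2 m₀ trivial
  have hY : ∀ y ∈ {y | I y m₀} \ {p}, I y m₀ := fun y hy => hy.1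
  have hYcard : ({y | I y m₀} \ {p}).ncard = s := by
    rw [ncard_sdiff_singleton_of_mem (s := {y | I y m₀}) hpm, hOrd.1 m₀, Nat.add_sub_cancel]
  have hN : (O \ {p}).ncard = (⋃ y ∈ {y | I y m₀} \ {p}, {n | I y n} \ {m₀}).ncard := by
    refine ncard_eq_of_forall_existsUnique (fun z n => I z n) (fun z ⟨hzO, hzp⟩ => ?_)
      (fun n hn => ?_)
    · have hzm : ¬ I z m₀ := fun h => hzp (hp z ⟨hzO, h⟩)
      obtain ⟨⟨y, n⟩, ⟨hzn, hyn, hym⟩, -⟩ := hGQ.2 z m₀ hzm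
      have hyp : y ≠ p := by
        rintro rfl
        exact hzp ((hO.2 n trivial).unique ⟨hzO, hzn⟩ ⟨hpO, hyn⟩)
      have hnm : n ≠ m₀ := fun h => hzm (h ▸ hzn)
      refine ⟨n, ⟨mem_biUnion (x := y) ⟨hym, hyp⟩ ⟨hyn, hnm⟩, hzn⟩,
        fun n' ⟨hn', hzn'⟩ => ?_⟩
      obtain ⟨y', ⟨hy'm, -⟩, hy'n', -⟩ := mem_iUnion₂.1 hn'
      exact (hGQ.proj_unique hzm hzn' hy'n' hy'm hzn hyn hym).2
    · obtain ⟨y, ⟨hym, hyp⟩, hyn, hnm⟩ := mem_iUnion₂.1 hn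
      obtain ⟨z, ⟨hzO, hzn⟩, hz⟩ := hO.2 n trivial
      have hzp : z ≠ p := by
        rintro rfl
        exact hnm (hGQ.1 z y (Ne.symm hyp) n m₀ hzn hyn hpm hym)
      exact ⟨z, ⟨⟨hzO, hzp⟩, hzn⟩, fun z' hz' => hz z' ⟨hz'.1.1, hz'.2⟩⟩
  rw [← ncard_sdiff_singleton_add_one hpO, hN, hGQ.ncard_biUnion_lines_sdiff hOrd.2 hY, hYcard]

theorem IsGQ.incid_of_ncard_lines_eq_one (hGQ : IsGQ I) (hdeg : ∀ x, {l | I x l}.ncard = 1)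
    (x : P) (l : L) : I x l := by
  by_contra hxl
  obtain ⟨⟨y, M⟩, ⟨hxM, hyM, hyl⟩, -⟩ := hGQ.2 x l hxl
  obtain ⟨l₀, hl₀⟩ := ncard_eq_one.1 (hdeg y)
  have hM : M ∈ ({l₀} : Set L) := hl₀ ▸ hyM
  have hl : l ∈ ({l₀} : Set L) := hl₀ ▸ hyl
  exact hxl (((mem_singleton_iff.1 hM).trans (mem_singleton_iff.1 hl).symm) ▸ hxM)

theorem IsGQ.exists_line_forall_incid_map (hGQ : IsGQ I)
    (hlines : ∀ l, ∃ x y, x ≠ y ∧ I x l ∧ I y l) {f : P → P} (hf : Function.Injective f)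
    (hcol : ∀ x y, Collinear I x y → Collinear I (f x) (f y)) (n : L) :
    ∃ m, ∀ z, I z n → I (f z) m := by
  obtain ⟨u, v, huv, hun, hvn⟩ := hlines n
  obtain ⟨m, hum, hvm⟩ := (hcol u v (collinear_of_incid hun hvn)).exists_line (hf.ne huv)
  exact ⟨m, fun z hzn => hGQ.incid_of_collinear_of_collinear (hf.ne huv) hum hvm
    (hcol z u (collinear_of_incid hzn hun)) (hcol z v (collinear_of_incid hzn hvn))⟩

theorem IsGQ.exists_isAuto_of_collinear_iff (hGQ : IsGQ I)
    (hlines : ∀ l, ∃ x y, x ≠ y ∧ I x l ∧ I y l) {f : P → P} (hf : Function.Bijective f)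
    (hcol : ∀ x y, x ≠ y → (Collinear I (f x) (f y) ↔ Collinear I x y)) :
    ∃ fl : L → L, IsAuto I f fl := by
  let e := Equiv.ofBijective f hf
  have hcol_iff : ∀ x y, Collinear I (f x) (f y) ↔ Collinear I x y := by
    intro x y
    rcases eq_or_ne x y with rfl | hxy
    exacts [iff_of_true (Or.inl rfl) (Or.inl rfl), hcol x y hxy]
  choose fl hfl using hGQ.exists_line_forall_incid_map hlines hf.1 fun x y => (hcol_iff x y).2
  choose fl' hfl' using hGQ.exists_line_forall_incid_map hlines e.symm.injective
    fun x y h => (hcol_iff _ _).1 (by simpa only [e, Equiv.ofBijective_apply_symm_apply] using h)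
  have hfl'_fl : ∀ n, fl' (fl n) = n := by
    intro n
    obtain ⟨u, v, huv, hun, hvn⟩ := hlines n
    have hu := hfl' _ _ (hfl n u hun)
    have hv := hfl' _ _ (hfl n v hvn)
    simp only [e, Equiv.ofBijective_symm_apply_apply] at hu hv
    exact hGQ.1 u v huv _ _ hu hv hun hvn
  have hfl_fl' : ∀ m, fl (fl' m) = m := by
    intro m
    obtain ⟨u, v, huv, hum, hvm⟩ := hlines m
    have hu := hfl _ _ (hfl' m u hum)
    have hv := hfl _ _ (hfl' m v hvm)
    simp only [e, Equiv.ofBijective_apply_symm_apply] at hu hv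
    exact hGQ.1 u v huv _ _ hu hv hum hvm
  refine ⟨fl, hf, ⟨Function.LeftInverse.injective hfl'_fl, fun m => ⟨fl' m, hfl_fl' m⟩⟩,
    fun x n => ⟨hfl n x, fun h => ?_⟩⟩
  simpa only [e, Equiv.ofBijective_symm_apply_apply, hfl'_fl] using hfl' _ _ h

end GeneralizedQuadrangle

section Subquadrangle

variable {I : P → L → Prop} {P' : Set P} {L' : Set L}

theorem HasOrder.exists_incid_line {s t : ℕ} (h : HasOrder I s t) (x : P) : ∃ l, I x l :=
  nonempty_of_ncard_ne_zero (s := {l | I x l}) (by rw [h.2 x]; omega)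

theorem HasOrder.exists_two_points {s t : ℕ} (h : HasOrder I s t) (hs : 1 ≤ s) (l : L) :
    ∃ x y, x ≠ y ∧ I x l ∧ I y l := by
  obtain ⟨x, hx, y, hy, hxy⟩ :=
    (one_lt_ncard (finite_of_ncard_ne_zero (by rw [h.1 l]; omega))).1 (by rw [h.1 l]; omega)
  exact ⟨x, y, hxy, hx, hy⟩

theorem IsFull.notMem_of_incid (hFull : IsFull I P' L') {x : P} {l : L} (hx : x ∉ P')
    (hxl : I x l) : l ∉ L' :=
  fun hl => hx (hFull l hl x hxl)

theorem IsGQ.eq_of_incid_of_notMem (hGQ : IsGQ I) (hSubGQ : IsGQ (SubIncid I P' L'))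
    (hP' : ∀ x : ↥P', ∃ m, SubIncid I P' L' x m) {l : L} (hl : l ∉ L') {u v : P}
    (hu : u ∈ P') (hv : v ∈ P') (hul : I u l) (hvl : I v l) : u = v := by
  by_contra huv
  obtain ⟨m, hum⟩ := hP' ⟨u, hu⟩
  have hvm : ¬ I v m.1 := fun hvm => hl (hGQ.1 u v huv m.1 l hum hvm hul hvl ▸ m.2)
  obtain ⟨⟨y, N⟩, ⟨hvN, hyN, hym⟩, -⟩ := hSubGQ.2 ⟨v, hv⟩ m hvm
  -- `(u, l)` and `(y, N)` both project `v` onto `m` in `S`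
  exact hl ((hGQ.proj_unique hvm hvl hul hum hvN hyN hym).2 ▸ N.2)

theorem IsGQ.collinear_subIncid_iff (hGQ : IsGQ I) (hSubGQ : IsGQ (SubIncid I P' L'))
    (hP' : ∀ x : ↥P', ∃ m, SubIncid I P' L' x m) {u v : ↥P'} :
    Collinear (SubIncid I P' L') u v ↔ Collinear I u.1 v.1 := by
  refine ⟨fun h => ?_, fun h => ?_⟩
  · rcases h with rfl | ⟨m, hum, hvm⟩
    exacts [Or.inl rfl, collinear_of_incid hum hvm]
  · rcases h with h | ⟨l, hul, hvl⟩
    · exact Or.inl (Subtype.ext h)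
    by_cases hl : l ∈ L'
    · exact Or.inr ⟨⟨l, hl⟩, hul, hvl⟩
    · exact Or.inl (Subtype.ext (hGQ.eq_of_incid_of_notMem hSubGQ hP' hl u.2 v.2 hul hvl))

theorem IsGQ.isOvoid_subtendedOvoid (hGQ : IsGQ I) (hFull : IsFull I P' L') {w : P}
    (hw : w ∉ P') : IsOvoid I P' L' (subtendedOvoid I P' w) := by
  refine ⟨fun y hy => hy.1, fun m hm => ?_⟩
  obtain ⟨⟨y, N⟩, ⟨hwN, hyN, hym⟩, hyuniq⟩ := hGQ.2 w m fun hwm => hw (hFull m hm w hwm)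
  refine ⟨y, ⟨⟨hFull m hm y hym, collinear_of_incid hwN hyN⟩, hym⟩, ?_⟩
  rintro z ⟨⟨hzP, hwz⟩, hzm⟩
  obtain ⟨N', hwN', hzN'⟩ := hwz.exists_line fun h => hw (h ▸ hzP)
  exact congrArg Prod.fst (hyuniq (z, N') ⟨hwN', hzN', hzm⟩)

theorem IsOvoid.subIncid {O : Set P} (hO : IsOvoid I P' L' O) :
    IsOvoid (SubIncid I P' L') univ univ (Subtype.val ⁻¹' O) := by
  refine ⟨subset_univ _, fun m _ => ?_⟩
  obtain ⟨y, ⟨hyO, hym⟩, hy⟩ := hO.2 m.1 m.2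
  exact ⟨⟨y, hO.1 hyO⟩, ⟨hyO, hym⟩, fun z hz => Subtype.ext (hy z.1 hz)⟩

theorem IsOvoid.ncard_eq [Finite P] {s t' : ℕ} (hSubGQ : IsGQ (SubIncid I P' L'))
    (hSubOrd : HasOrder (SubIncid I P' L') s t') {O : Set P} (hO : IsOvoid I P' L' O)
    (m₀ : ↥L') : O.ncard = s * t' + 1 := by
  rw [← ncard_preimage_of_injective_subset_range (f := (Subtype.val : ↥P' → P))
    Subtype.val_injective (by rw [Subtype.range_coe]; exact hO.1)]
  exact hSubGQ.ncard_eq_of_isOvoid hSubOrd hO.subIncid m₀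

theorem IsOvoid.not_collinear {O : Set P} (hO : IsOvoid I P' L' O) {u v : ↥P'} (hu : u.1 ∈ O)
    (hv : v.1 ∈ O) (huv : u ≠ v) : ¬ Collinear (SubIncid I P' L') u v := by
  rintro (h | ⟨m, hum, hvm⟩)
  exacts [huv h, huv (Subtype.ext ((hO.2 m.1 m.2).unique ⟨hu, hum⟩ ⟨hv, hvm⟩))]

theorem EPoint.isOvoid (hGQ : IsGQ I) (hFull : IsFull I P' L') (O : EPoint I P') :
    IsOvoid I P' L' O.1 := by
  obtain ⟨w, hw, hO⟩ := O.2
  exact hO ▸ hGQ.isOvoid_subtendedOvoid hFull hw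

end Subquadrangle

structure IsFullSubGQ (I : P → L → Prop) (P' : Set P) (L' : Set L) (s t t' : ℕ) : Prop where
  isGQ : IsGQ I
  hasOrder : HasOrder I s t
  isGQ_sub : IsGQ (SubIncid I P' L')
  hasOrder_sub : HasOrder (SubIncid I P' L') s t'
  isFull : IsFull I P' L'
  t_eq : t = s * t'

namespace IsFullSubGQ

variable {I : P → L → Prop} {P' : Set P} {L' : Set L} {s t t' : ℕ}

theorem eq_of_incid_of_notMem (h : IsFullSubGQ I P' L' s t t') {l : L} (hl : l ∉ L') {u v : P}
    (hu : u ∈ P') (hv : v ∈ P') (hul : I u l) (hvl : I v l) : u = v :=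
  h.isGQ.eq_of_incid_of_notMem h.isGQ_sub h.hasOrder_sub.exists_incid_line hl hu hv hul hvl

theorem collinear_subIncid_iff (h : IsFullSubGQ I P' L' s t t') {u v : ↥P'} :
    Collinear (SubIncid I P' L') u v ↔ Collinear I u.1 v.1 :=
  h.isGQ.collinear_subIncid_iff h.isGQ_sub h.hasOrder_sub.exists_incid_line

/-- The `s t' + 1 = t + 1` points of the ovoid subtended by `x` lie on distinct lines through
`x`, so these are all the lines through `x`. -/
theorem exists_mem_incid [Finite P] (h : IsFullSubGQ I P' L' s t t') (m₀ : ↥L') {x : P}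
    (hx : x ∉ P') {l : L} (hxl : I x l) : ∃ y ∈ P', I y l := by
  have hT : {n | I x n ∧ ∃ y ∈ P', I y n}.ncard = (subtendedOvoid I P' x).ncard := by
    refine ncard_eq_of_forall_existsUnique (fun n y => I y n)
      (fun n ⟨hxn, y, hyP, hyn⟩ => ?_) (fun y hy => ?_)
    · exact ⟨y, ⟨⟨hyP, collinear_of_incid hxn hyn⟩, hyn⟩, fun y' ⟨hy', hy'n⟩ =>
        h.eq_of_incid_of_notMem (h.isFull.notMem_of_incid hx hxn) hy'.1 hyP hy'n hyn⟩
    · have hxy : x ≠ y := fun e => hx (e ▸ hy.1)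
      obtain ⟨n, hxn, hyn⟩ := hy.2.exists_line hxy
      exact ⟨n, ⟨⟨hxn, y, hy.1, hyn⟩, hyn⟩, fun n' ⟨⟨hxn', _⟩, hyn'⟩ =>
        h.isGQ.1 x y hxy n' n hxn' hyn' hxn hyn⟩
  have hall : {n | I x n ∧ ∃ y ∈ P', I y n} = {n | I x n} := by
    refine eq_of_subset_of_ncard_le (fun n hn => hn.1) ?_
      (finite_of_ncard_ne_zero (by rw [h.hasOrder.2 x]; omega))
    rw [hT, (h.isGQ.isOvoid_subtendedOvoid h.isFull hx).ncard_eq h.isGQ_sub h.hasOrder_sub m₀,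
      h.hasOrder.2, h.t_eq]
  exact (hall.symm ▸ hxl : l ∈ {n | I x n ∧ ∃ y ∈ P', I y n}).2

theorem existsUnique_mem_incid [Finite P] (h : IsFullSubGQ I P' L' s t t') (m₀ : ↥L') {l : L}
    (hl : l ∉ L') : ∃! y, y ∈ P' ∧ I y l := by
  obtain ⟨x, hxl⟩ : ∃ x, I x l :=
    nonempty_of_ncard_ne_zero (s := {x | I x l}) (by rw [h.hasOrder.1 l]; omega)
  obtain ⟨y, hyP, hyl⟩ : ∃ y ∈ P', I y l := by
    by_cases hx : x ∈ P'
    exacts [⟨x, hx, hxl⟩, h.exists_mem_incid m₀ hx hxl]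
  exact ⟨y, ⟨hyP, hyl⟩, fun z hz => h.eq_of_incid_of_notMem hl hz.1 hyP hz.2 hyl⟩

theorem existsUnique_forall_mem_rosette [Finite P] (h : IsFullSubGQ I P' L' s t t') (hs : 2 ≤ s)
    (m₀ : ↥L') {l : L} (hl : l ∉ L') : ∃! x : ↥P', ∀ O ∈ rosette I P' l, x.1 ∈ O := by
  obtain ⟨y, ⟨hyP, hyl⟩, hy⟩ := h.existsUnique_mem_incid m₀ hl
  refine ⟨⟨y, hyP⟩, ?_, fun x hx => Subtype.ext (hy x.1 ⟨x.2, ?_⟩)⟩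
  · rintro O ⟨z, -, hzl, rfl⟩
    exact ⟨hyP, collinear_of_incid hzl hyl⟩
  -- `x` is collinear with two points of `l` outside `S'`, hence lies on `l`
  · obtain ⟨z₁, hz₁, z₂, hz₂, hne⟩ := (one_lt_ncard (toFinite _)).1 (by
      rw [ncard_sdiff_singleton_of_mem (s := {z | I z l}) hyl, h.hasOrder.1 l]; omega :
        1 < ({z | I z l} \ {y}).ncard)
    have hout : ∀ z ∈ {z | I z l} \ {y}, z ∉ P' := fun z hz hzP => hz.2 (hy z ⟨hzP, hz.1⟩)
    exact h.isGQ.incid_of_collinear_of_collinear hne hz₁.1 hz₂.1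
      (hx _ ⟨z₁, hout z₁ hz₁, hz₁.1, rfl⟩).2.symm
      (hx _ ⟨z₂, hout z₂ hz₂, hz₂.1, rfl⟩).2.symm

theorem existsUnique_base [Finite P] (h : IsFullSubGQ I P' L' s t t') (hs : 2 ≤ s) (m₀ : ↥L')
    (R : ELine I P' L') : ∃! x : ↥P', ∀ O ∈ R.1, x.1 ∈ O := by
  obtain ⟨l, hl, hR⟩ := R.2
  exact hR ▸ h.existsUnique_forall_mem_rosette hs m₀ hl

theorem exists_incid_notMem (h : IsFullSubGQ I P' L' s t t') (hs : 2 ≤ s) (ht' : 1 ≤ t')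
    (p : ↥P') : ∃ l ∉ L', I p.1 l := by
  by_contra! hno
  have hsub : {l | I p.1 l} ⊆ Subtype.val '' {m : ↥L' | SubIncid I P' L' p m} :=
    fun l hl => ⟨⟨l, not_not.1 fun h' => hno l h' hl⟩, hl, rfl⟩
  have := ncard_le_ncard hsub
    ((finite_of_ncard_ne_zero (by rw [h.hasOrder_sub.2 p]; omega)).image _)
  rw [ncard_image_of_injective _ Subtype.val_injective, h.hasOrder_sub.2 p, h.hasOrder.2,
    h.t_eq] at this
  nlinarith

theorem one_le_of_ne_univ (h : IsFullSubGQ I P' L' s t t') (hs : 1 ≤ s)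
    (hProper : P' ≠ univ ∨ L' ≠ univ) (p : ↥P') : 1 ≤ t' := by
  by_contra! ht'
  have hdeg : ∀ x, {l | I x l}.ncard = 1 := by
    simpa [h.t_eq, Nat.lt_one_iff.1 ht'] using h.hasOrder.2
  have hall := h.isGQ.incid_of_ncard_lines_eq_one hdeg
  obtain ⟨m, -⟩ := h.hasOrder_sub.exists_incid_line p
  refine hProper.elim (fun hP => hP (eq_univ_of_forall fun x => h.isFull m.1 m.2 x (hall x m.1)))
    fun hL => hL (eq_univ_of_forall fun l => ?_)
  obtain ⟨x, y, hxy, hxl, hyl⟩ := h.hasOrder.exists_two_points hs l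
  exact h.isGQ.1 x y hxy m.1 l (hall x m.1) (hall y m.1) hxl hyl ▸ m.2

/-- In `S` the two points have `t + 1 = s t' + 1` common neighbours, only `t' + 1` of them
in `S'`. -/
theorem exists_mem_subtendedOvoid [Finite P] (h : IsFullSubGQ I P' L' s t t') (hs : 2 ≤ s)
    (ht' : 1 ≤ t') {u v : ↥P'} (huv : ¬ Collinear (SubIncid I P' L') u v) :
    ∃ z ∉ P', u.1 ∈ subtendedOvoid I P' z ∧ v.1 ∈ subtendedOvoid I P' z := by
  by_contra! hno
  have hsub : perpSet I {u.1, v.1} ⊆ Subtype.val '' perpSet (SubIncid I P' L') {u, v} := by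
    intro z hz
    have hzP : z ∈ P' := by
      by_contra hzP
      exact hno z hzP ⟨u.2, hz u.1 (by simp)⟩ ⟨v.2, hz v.1 (by simp)⟩
    refine ⟨⟨z, hzP⟩, ?_, rfl⟩
    rintro w (rfl | rfl) <;> exact h.collinear_subIncid_iff.2 (hz _ (by simp))
  have := ncard_le_ncard hsub (toFinite _)
  rw [ncard_image_of_injective _ Subtype.val_injective,
    h.isGQ.ncard_perpSet_pair h.hasOrder.2 (mt h.collinear_subIncid_iff.2 huv),
    h.isGQ_sub.ncard_perpSet_pair h.hasOrder_sub.2 huv, h.t_eq] at this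
  nlinarith

end IsFullSubGQ

section Cover

variable {I : P → L → Prop} {P' : Set P} {L' : Set L} {s t t' : ℕ}
  {gp : APoint P' → EPoint I P'} {gl : ALine L' → ELine I P' L'} {star : ↥P' → ↥P'}

theorem star_mem_subtendedOvoid (hFull : IsFull I P' L')
    (hcov : IsCover (AIncid I P' L') (EIncid I P' L') gp gl)
    (hstar : ∀ (x : ↥P') (U : ALine L'), (∀ O ∈ (gl U).1, x.1 ∈ O) → I (star x).1 U.1)
    {a : APoint P'} {x : ↥P'} (hx : x.1 ∈ (gp a).1) : (star x).1 ∈ subtendedOvoid I P' a.1 := by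
  obtain ⟨w, hw, hOw⟩ := (gp a).2
  obtain ⟨m, hwm, hxm⟩ := (hOw ▸ hx : x.1 ∈ subtendedOvoid I P' w).2.exists_line
    fun e => hw (e ▸ x.2)
  -- lift the rosette of the line `w x`, which contains `gp a`, to a line through `a`
  let R : ELine I P' L' := ⟨rosette I P' m, m, hFull.notMem_of_incid hw hwm, rfl⟩
  obtain ⟨U, ⟨haU, hUR⟩, -⟩ :=
    hcov.2.1 a R (show (gp a).1 ∈ rosette I P' m from ⟨w, hw, hwm, hOw⟩)
  have hxU : ∀ O ∈ (gl U).1, x.1 ∈ O := by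
    rw [hUR]
    rintro O ⟨z, -, hzm, rfl⟩
    exact ⟨x.2, collinear_of_incid hzm hxm⟩
  exact ⟨(star x).2, collinear_of_incid haU (hstar x U hxU)⟩

theorem forall_mem_gl_of_incid_star [Finite P] (h : IsFullSubGQ I P' L' s t t') (hs : 2 ≤ s)
    (hstar : ∀ (x : ↥P') (U : ALine L'), (∀ O ∈ (gl U).1, x.1 ∈ O) → I (star x).1 U.1)
    (hinj : Function.Injective star) {x : ↥P'} {U : ALine L'} (hU : I (star x).1 U.1) :
    ∀ O ∈ (gl U).1, x.1 ∈ O := by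
  obtain ⟨m₀, -⟩ := h.hasOrder_sub.exists_incid_line x
  obtain ⟨y, hy, -⟩ := h.existsUnique_base hs m₀ (gl U)
  rwa [hinj (Subtype.ext (h.eq_of_incid_of_notMem U.2 (star y).2 (star x).2 (hstar y U hy) hU))]
    at hy

theorem mem_gp_of_star_mem [Finite P] (h : IsFullSubGQ I P' L' s t t') (hs : 2 ≤ s)
    (hcov : IsCover (AIncid I P' L') (EIncid I P' L') gp gl)
    (hstar : ∀ (x : ↥P') (U : ALine L'), (∀ O ∈ (gl U).1, x.1 ∈ O) → I (star x).1 U.1)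
    (hinj : Function.Injective star) {a : APoint P'} {x : ↥P'}
    (hx : (star x).1 ∈ subtendedOvoid I P' a.1) : x.1 ∈ (gp a).1 := by
  obtain ⟨m, ham, hxm⟩ := hx.2.exists_line fun e => a.2 (e ▸ (star x).2)
  let U : ALine L' := ⟨m, h.isFull.notMem_of_incid a.2 ham⟩
  exact forall_mem_gl_of_incid_star h hs hstar hinj (U := U) hxm _ (hcov.1 a U ham)

theorem exists_star_eq [Finite P] (h : IsFullSubGQ I P' L' s t t') (hs : 2 ≤ s) (ht' : 1 ≤ t')
    (hstar : ∀ (x : ↥P') (U : ALine L'), (∀ O ∈ (gl U).1, x.1 ∈ O) → I (star x).1 U.1)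
    (p : ↥P') : ∃ x, star x = p := by
  obtain ⟨m₀, -⟩ := h.hasOrder_sub.exists_incid_line p
  obtain ⟨l, hl, hpl⟩ := h.exists_incid_notMem hs ht' p
  obtain ⟨x, hx, -⟩ := h.existsUnique_base hs m₀ (gl ⟨l, hl⟩)
  exact ⟨x, Subtype.ext (h.eq_of_incid_of_notMem hl (star x).2 p.2 (hstar x _ hx) hpl)⟩

/-- Both directions go through a subtended ovoid containing the two non-collinear points:
`x ∈ gp a` forces `star x ∈ O_a`, and `star x ∈ O_z` forces `x ∈ gp z`. -/
theorem collinear_star_iff [Finite P] (h : IsFullSubGQ I P' L' s t t') (hs : 2 ≤ s)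
    (ht' : 1 ≤ t') (hcov : IsCover (AIncid I P' L') (EIncid I P' L') gp gl)
    (hgp : Function.Surjective gp)
    (hstar : ∀ (x : ↥P') (U : ALine L'), (∀ O ∈ (gl U).1, x.1 ∈ O) → I (star x).1 U.1)
    (hinj : Function.Injective star) {x y : ↥P'} (hxy : x ≠ y) :
    Collinear (SubIncid I P' L') (star x) (star y) ↔ Collinear (SubIncid I P' L') x y := by
  refine ⟨fun hcol => ?_, fun hcol => ?_⟩ <;> by_contra hn
  · obtain ⟨z, hz, hxz, hyz⟩ := h.exists_mem_subtendedOvoid hs ht' hn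
    obtain ⟨a, ha⟩ := hgp ⟨subtendedOvoid I P' z, z, hz, rfl⟩
    exact (h.isGQ.isOvoid_subtendedOvoid h.isFull a.2).not_collinear
      (star_mem_subtendedOvoid h.isFull hcov hstar (ha ▸ hxz))
      (star_mem_subtendedOvoid h.isFull hcov hstar (ha ▸ hyz)) (hinj.ne hxy) hcol
  · obtain ⟨z, hz, hxz, hyz⟩ := h.exists_mem_subtendedOvoid hs ht' hn
    exact (EPoint.isOvoid h.isGQ h.isFull (gp ⟨z, hz⟩)).not_collinear
      (mem_gp_of_star_mem h hs hcov hstar hinj hxz)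
      (mem_gp_of_star_mem h hs hcov hstar hinj hyz) hxy hcol

end Cover

theorem statement17_general {P L : Type} [Finite P]
    (I : P → L → Prop) (P' : Set P) (L' : Set L) (s t t' θ : ℕ)
    (hGQ : IsGQ I) (hOrd : HasOrder I s t) (hs : 2 ≤ s)
    (hSubGQ : IsGQ (SubIncid I P' L'))
    (hSubOrd : HasOrder (SubIncid I P' L') s t')
    (hFull : IsFull I P' L')
    (hProper : P' ≠ Set.univ ∨ L' ≠ Set.univ)
    (htst : t = s * t') (hθ : 1 < θ)
    (gp : APoint P' → EPoint I P') (gl : ALine L' → ELine I P' L')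
    (hcov : IsCover (AIncid I P' L') (EIncid I P' L') gp gl)
    (hfibp : ∀ O : EPoint I P', (gp ⁻¹' {O}).ncard = θ)
    (star : ↥P' → ↥P')
    (hstar : ∀ (x : ↥P') (U : ALine L'),
      (∀ O ∈ (gl U).1, x.1 ∈ O) → I (star x).1 U.1) :
    (∀ x y : ↥P', x ≠ y →
      (Collinear (SubIncid I P' L') (star x) (star y) ↔
        Collinear (SubIncid I P' L') x y)) ∧
    ∃ starl : ↥L' → ↥L', IsAuto (SubIncid I P' L') star starl := by
  have h : IsFullSubGQ I P' L' s t t' := ⟨hGQ, hOrd, hSubGQ, hSubOrd, hFull, htst⟩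
  have ht' : ∀ x : ↥P', 1 ≤ t' := h.one_le_of_ne_univ (by omega) hProper
  have hgp : Function.Surjective gp := fun O =>
    nonempty_of_ncard_ne_zero (s := gp ⁻¹' {O}) (by rw [hfibp O]; omega)
  have hbij : Function.Bijective star :=
    Finite.surjective_iff_bijective.1 fun p => exists_star_eq h hs (ht' p) hstar p
  have hcol : ∀ x y : ↥P', x ≠ y → (Collinear (SubIncid I P' L') (star x) (star y) ↔
      Collinear (SubIncid I P' L') x y) :=
    fun x y => collinear_star_iff h hs (ht' x) hcov hgp hstar hbij.1
  exact ⟨hcol, hSubGQ.exists_isAuto_of_collinear_iff (hSubOrd.exists_two_points (by omega))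
    hbij hcol⟩

/-- with `x ↦ x**` as in Statement 16, for distinct points `x, y` of
`S'`, `x**` and `y**` are collinear in `S'` iff `x` and `y` are; consequently `x ↦ x**`
together with an induced map on lines is an automorphism of `S'`. -/
theorem statement17 {P L : Type} [Finite P] [Finite L]
    (I : P → L → Prop) (P' : Set P) (L' : Set L) (s t t' θ : ℕ)
    (hGQ : IsGQ I) (hOrd : HasOrder I s t) (hs : 2 ≤ s)
    (hSubGQ : IsGQ (SubIncid I P' L'))
    (hSubOrd : HasOrder (SubIncid I P' L') s t')
    (hFull : IsFull I P' L')
    (hProper : P' ≠ Set.univ ∨ L' ≠ Set.univ)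
    (htst : t = s * t') (hθsub : AllThetaSubtended I P' θ) (hθ : 1 < θ)
    (gp : APoint P' → EPoint I P') (gl : ALine L' → ELine I P' L')
    (hcov : IsCover (AIncid I P' L') (EIncid I P' L') gp gl)
    (hfibp : ∀ O : EPoint I P', (gp ⁻¹' {O}).ncard = θ)
    (hfibl : ∀ R : ELine I P' L', (gl ⁻¹' {R}).ncard = θ)
    (star : ↥P' → ↥P')
    (hstar_mem : ∀ x : ↥P', ∃ U : ALine L', ∀ O ∈ (gl U).1, x.1 ∈ O)
    (hstar : ∀ (x : ↥P') (U : ALine L'),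
      (∀ O ∈ (gl U).1, x.1 ∈ O) → I (star x).1 U.1) :
    (∀ x y : ↥P', x ≠ y →
      (Collinear (SubIncid I P' L') (star x) (star y) ↔
        Collinear (SubIncid I P' L') x y)) ∧
    ∃ starl : ↥L' → ↥L', IsAuto (SubIncid I P' L') star starl :=
  statement17_general I P' L' s t t' θ hGQ hOrd hs hSubGQ hSubOrd hFull hProper htst hθ gp gl hcov
    hfibp star hstar

end GQpaper
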